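/- arXiv:1307.4173 — 4 statements merged into one kernel-verified Lean document; each statement's English description precedes it below -/
import Mathlib

section
/- Let E be a real Banach space, T > 0 and M > 0. Let J : [0, T] → E be continuous and let K : {(t, s) : 0 ≤ s ≤ t ≤ T} → (E →L E) be a continuous map into the bounded linear operators on E with ‖K(t, s)‖ ≤ M for all 0 ≤ s ≤ t ≤ T. Then there exists a unique continuous function U : [0, T] → E satisfying the Volterra integral equation U(t) = J(t) + ∫₀ᵗ K(t, s)(U(s)) ds for all t ∈ [0, T]. -/
open Set MeasureTheory

/-!
The Volterra operator `Φ u t = J t + ∫₀ᵗ K t s (u s) ds` acts on `C([0, T], E)`, and induction on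
`n` gives `‖Φⁿ u t - Φⁿ v t‖ ≤ (M t)ⁿ / n! · ‖u - v‖∞`. Since `(M T)ⁿ / n! → 0`, some iterate of `Φ`
is a contraction, so `Φ` has exactly one fixed point by Banach's theorem. For `Φ u` to be
continuous the kernel is first extended to all of `ℝ²` through a retraction onto the triangle
`0 ≤ s ≤ t ≤ T`, the only place where the equation evaluates it.
-/

open Function intervalIntegral
open scoped Nat

theorem existsUnique_isFixedPt_of_dist_iterate_le {X : Type*} [MetricSpace X] [CompleteSpace X]
    [Nonempty X] {f : X → X} {C : ℝ}
    (hf : ∀ n x y, dist (f^[n] x) (f^[n] y) ≤ C ^ n / n ! * dist x y) :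
    ∃! x, IsFixedPt f x := by
  obtain ⟨n, hn⟩ := ((FloorSemiring.tendsto_pow_div_factorial_atTop C).eventually
    (gt_mem_nhds one_pos)).exists
  have hcontr : ContractingWith (C ^ n / n !).toNNReal f^[n] :=
    ⟨Real.toNNReal_lt_one.2 hn, LipschitzWith.of_dist_le_mul fun x y =>
      (hf n x y).trans (by gcongr; exact Real.le_coe_toNNReal _)⟩
  refine ⟨_, hcontr.isFixedPt_fixedPoint_iterate, fun y hy => ?_⟩
  exact hcontr.fixedPoint_unique (hy.iterate n)

def triangleRetraction (T : ℝ) (p : ℝ × ℝ) : ℝ × ℝ :=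
  (max 0 (min p.1 T), max 0 (min p.2 (max 0 (min p.1 T))))

theorem continuous_triangleRetraction (T : ℝ) : Continuous (triangleRetraction T) := by
  unfold triangleRetraction; fun_prop

theorem triangleRetraction_mem {T : ℝ} (hT : 0 ≤ T) (p : ℝ × ℝ) :
    triangleRetraction T p ∈ {p : ℝ × ℝ | 0 ≤ p.2 ∧ p.2 ≤ p.1 ∧ p.1 ≤ T} :=
  ⟨le_max_left _ _, max_le (le_max_left _ _) (min_le_right _ _), max_le hT (min_le_right _ _)⟩

theorem triangleRetraction_of_mem {T : ℝ} {p : ℝ × ℝ}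
    (hp : p ∈ {p : ℝ × ℝ | 0 ≤ p.2 ∧ p.2 ≤ p.1 ∧ p.1 ≤ T}) : triangleRetraction T p = p := by
  obtain ⟨hs, hst, htT⟩ := hp
  simp only [triangleRetraction, min_eq_left htT, max_eq_right (hs.trans hst), min_eq_left hst,
    max_eq_right hs]

section Volterra

variable {E : Type*} [NormedAddCommGroup E] [NormedSpace ℝ E]

def IsVolterraSolution (T : ℝ) (J : ℝ → E) (K : ℝ → ℝ → E →L[ℝ] E) (U : ℝ → E) : Prop :=
  ContinuousOn U (Icc 0 T) ∧ ∀ t ∈ Icc 0 T, U t = J t + ∫ s in 0..t, K t s (U s)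

theorem isVolterraSolution_congr_kernel {T : ℝ} {J : ℝ → E} {K K' : ℝ → ℝ → E →L[ℝ] E}
    (hKK' : ∀ s t, 0 ≤ s → s ≤ t → t ≤ T → K t s = K' t s) {U : ℝ → E} :
    IsVolterraSolution T J K U ↔ IsVolterraSolution T J K' U := by
  refine and_congr_right fun _ => forall₂_congr fun t ht => ?_
  rw [integral_congr fun s hs => ?_]
  rw [uIcc_of_le ht.1] at hs
  rw [hKK' s t hs.1 hs.2 ht.2]

section VolterraOp

variable {T : ℝ} (hT : 0 ≤ T) {J : ℝ → E} (hJ : ContinuousOn J (Icc 0 T))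
  {K : ℝ → ℝ → E →L[ℝ] E} (hK : Continuous fun p : ℝ × ℝ => K p.1 p.2)

noncomputable def volterraOp (u : C(Icc 0 T, E)) : C(Icc 0 T, E) where
  toFun t := J t + ∫ s in 0..t, K t s (IccExtend hT u s)
  continuous_toFun := by
    refine hJ.domRestrict.add
      (Continuous.comp (g := fun t : ℝ => ∫ s in 0..t, K t s (IccExtend hT u s)) ?_
        continuous_subtype_val)
    exact continuous_parametric_intervalIntegral_of_continuous
      (hK.clm_apply (u.continuous.Icc_extend'.comp continuous_snd)) continuous_id

theorem volterraOp_apply (u : C(Icc 0 T, E)) (t : Icc 0 T) :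
    volterraOp hT hJ hK u t = J t + ∫ s in 0..t, K t s (IccExtend hT u s) :=
  rfl

theorem volterraOp_sub_apply (u v : C(Icc 0 T, E)) (t : Icc 0 T) :
    volterraOp hT hJ hK u t - volterraOp hT hJ hK v t =
      ∫ s in 0..t, K t s (IccExtend hT u s - IccExtend hT v s) := by
  have hint (w : C(Icc 0 T, E)) :
      IntervalIntegrable (fun s => K t s (IccExtend hT w s)) volume 0 t :=
    ((hK.comp (Continuous.prodMk_right _)).clm_apply
      w.continuous.Icc_extend').intervalIntegrable _ _
  simp only [volterraOp_apply, map_sub, integral_sub (hint u) (hint v)]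
  abel

variable {M : ℝ}

theorem norm_volterraOp_sub_le (hKbd : ∀ s t : ℝ, 0 ≤ s → s ≤ t → t ≤ T → ‖K t s‖ ≤ M)
    {u v : C(Icc 0 T, E)} {c : ℝ} {n : ℕ}
    (huv : ∀ s : Icc 0 T, ‖u s - v s‖ ≤ c * (s : ℝ) ^ n) (t : Icc 0 T) :
    ‖volterraOp hT hJ hK u t - volterraOp hT hJ hK v t‖ ≤ M * c * t ^ (n + 1) / (n + 1) := by
  have hbound : ∀ s ∈ Ioc (0 : ℝ) t,
      ‖K t s (IccExtend hT u s - IccExtend hT v s)‖ ≤ M * c * s ^ n := by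
    rintro s ⟨hs0, hst⟩
    have hs : s ∈ Icc 0 T := ⟨hs0.le, hst.trans t.2.2⟩
    have hKts := hKbd s t hs0.le hst t.2.2
    calc ‖K t s (IccExtend hT u s - IccExtend hT v s)‖
        ≤ ‖K t s‖ * ‖u ⟨s, hs⟩ - v ⟨s, hs⟩‖ := by
          rw [IccExtend_of_mem hT u hs, IccExtend_of_mem hT v hs]; exact (K t s).le_opNorm _
      _ ≤ M * (c * s ^ n) :=
          mul_le_mul hKts (huv ⟨s, hs⟩) (norm_nonneg _) ((norm_nonneg _).trans hKts)
      _ = M * c * s ^ n := by ring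
  rw [volterraOp_sub_apply]
  calc _ ≤ ∫ s in (0 : ℝ)..t, M * c * s ^ n :=
        norm_integral_le_of_norm_le t.2.1 (Filter.Eventually.of_forall hbound)
          (by apply Continuous.intervalIntegrable; fun_prop)
    _ = M * c * t ^ (n + 1) / (n + 1) := by
        rw [intervalIntegral.integral_const_mul, integral_pow]; ring

theorem norm_iterate_volterraOp_sub_le (hKbd : ∀ s t : ℝ, 0 ≤ s → s ≤ t → t ≤ T → ‖K t s‖ ≤ M)
    (n : ℕ) (u v : C(Icc 0 T, E)) (t : Icc 0 T) :
    ‖(volterraOp hT hJ hK)^[n] u t - (volterraOp hT hJ hK)^[n] v t‖ ≤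
      M ^ n * t ^ n / n ! * dist u v := by
  induction n generalizing t with
  | zero => simpa [dist_eq_norm] using ContinuousMap.dist_apply_le_dist (f := u) (g := v) t
  | succ n ih =>
    rw [iterate_succ_apply', iterate_succ_apply']
    refine (norm_volterraOp_sub_le hT hJ hK hKbd (c := M ^ n / n ! * dist u v)
      (fun s => (ih s).trans_eq (by ring)) t).trans_eq ?_
    rw [Nat.factorial_succ]
    push_cast
    field_simp
    ring

theorem dist_iterate_volterraOp_le (hKbd : ∀ s t : ℝ, 0 ≤ s → s ≤ t → t ≤ T → ‖K t s‖ ≤ M)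
    (n : ℕ) (u v : C(Icc 0 T, E)) :
    dist ((volterraOp hT hJ hK)^[n] u) ((volterraOp hT hJ hK)^[n] v) ≤
      (M * T) ^ n / n ! * dist u v := by
  have hM : 0 ≤ M := (norm_nonneg _).trans (hKbd 0 0 le_rfl le_rfl hT)
  refine (ContinuousMap.dist_le (by positivity)).2 fun t => ?_
  rw [dist_eq_norm]
  refine (norm_iterate_volterraOp_sub_le hT hJ hK hKbd n u v t).trans ?_
  rw [mul_pow]
  gcongr
  exacts [t.2.1, t.2.2]

theorem isFixedPt_volterraOp_iff {u : C(Icc 0 T, E)} {U : ℝ → E}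
    (hu : ∀ t : Icc 0 T, u t = U t) :
    IsFixedPt (volterraOp hT hJ hK) u ↔ ∀ t ∈ Icc 0 T, U t = J t + ∫ s in 0..t, K t s (U s) := by
  have hext : ∀ t ∈ Icc 0 T, ∀ s ∈ uIcc 0 t, IccExtend hT u s = U s := fun t ht s hs => by
    rw [uIcc_of_le ht.1] at hs
    have hs' : s ∈ Icc 0 T := ⟨hs.1, hs.2.trans ht.2⟩
    rw [IccExtend_of_mem hT u hs', hu]
  rw [IsFixedPt, ContinuousMap.ext_iff, Subtype.forall]
  refine forall₂_congr fun t ht => ?_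
  rw [volterraOp_apply, hu, eq_comm, integral_congr fun s hs => by rw [hext t ht s hs]]

end VolterraOp

theorem existsUnique_isVolterraSolution [CompleteSpace E] {T M : ℝ} (hT : 0 ≤ T) {J : ℝ → E}
    (hJ : ContinuousOn J (Icc 0 T)) {K : ℝ → ℝ → E →L[ℝ] E}
    (hK : Continuous fun p : ℝ × ℝ => K p.1 p.2)
    (hKbd : ∀ s t : ℝ, 0 ≤ s → s ≤ t → t ≤ T → ‖K t s‖ ≤ M) :
    ∃ U, IsVolterraSolution T J K U ∧
      ∀ V, IsVolterraSolution T J K V → EqOn U V (Icc 0 T) := by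
  obtain ⟨u, hu, huniq⟩ := existsUnique_isFixedPt_of_dist_iterate_le
    (dist_iterate_volterraOp_le hT hJ hK hKbd)
  refine ⟨IccExtend hT u, ⟨u.continuous.Icc_extend'.continuousOn,
    (isFixedPt_volterraOp_iff hT hJ hK fun t => (IccExtend_val hT u t).symm).1 hu⟩, ?_⟩
  rintro V ⟨hVcont, hV⟩ t ht
  have hvu : ⟨_, hVcont.domRestrict⟩ = u :=
    huniq _ ((isFixedPt_volterraOp_iff hT hJ hK fun _ => rfl).2 hV)
  rw [IccExtend_of_mem hT u ht, ← hvu]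
  rfl

end Volterra

theorem stmt_2_general {E : Type*} [NormedAddCommGroup E] [NormedSpace ℝ E] [CompleteSpace E]
    (T M : ℝ) (hT : 0 < T)
    (J : ℝ → E) (hJ : ContinuousOn J (Icc 0 T))
    (K : ℝ → ℝ → E →L[ℝ] E)
    (hKcont : ContinuousOn (fun p : ℝ × ℝ => K p.1 p.2)
      {p : ℝ × ℝ | 0 ≤ p.2 ∧ p.2 ≤ p.1 ∧ p.1 ≤ T})
    (hKbd : ∀ s t : ℝ, 0 ≤ s → s ≤ t → t ≤ T → ‖K t s‖ ≤ M) :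
    ∃ U : ℝ → E,
      (ContinuousOn U (Icc 0 T) ∧
        ∀ t ∈ Icc (0:ℝ) T, U t = J t + ∫ s in (0:ℝ)..t, K t s (U s)) ∧
      ∀ V : ℝ → E,
        (ContinuousOn V (Icc 0 T) ∧
          ∀ t ∈ Icc (0:ℝ) T, V t = J t + ∫ s in (0:ℝ)..t, K t s (V s)) →
        EqOn U V (Icc 0 T) := by
  set K' : ℝ → ℝ → E →L[ℝ] E := fun t s => K (triangleRetraction T (t, s)).1
    (triangleRetraction T (t, s)).2
  have hK'cont : Continuous fun p : ℝ × ℝ => K' p.1 p.2 :=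
    hKcont.comp_continuous (continuous_triangleRetraction T) (triangleRetraction_mem hT.le)
  have hKK' : ∀ s t, 0 ≤ s → s ≤ t → t ≤ T → K t s = K' t s := fun s t hs hst htT => by
    simp only [K', triangleRetraction_of_mem (show (t, s) ∈ _ from ⟨hs, hst, htT⟩)]
  obtain ⟨U, hU, huniq⟩ := existsUnique_isVolterraSolution hT.le hJ hK'cont
    fun s t hs hst htT => hKK' s t hs hst htT ▸ hKbd s t hs hst htT
  exact ⟨U, (isVolterraSolution_congr_kernel hKK').2 hU,
    fun V hV => huniq V ((isVolterraSolution_congr_kernel hKK').1 hV)⟩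

/-- Lemma 4.1 (abstract form): existence and uniqueness of a continuous solution to the
linear Volterra integral equation `U(t) = J(t) + ∫₀ᵗ K(t,s)(U(s)) ds` on `[0, T]` in a real
Banach space, for a continuous, uniformly bounded operator-valued kernel `K`. -/
theorem stmt_2 {E : Type*} [NormedAddCommGroup E] [NormedSpace ℝ E] [CompleteSpace E]
    (T M : ℝ) (hT : 0 < T) (hM : 0 < M)
    (J : ℝ → E) (hJ : ContinuousOn J (Icc 0 T))
    (K : ℝ → ℝ → E →L[ℝ] E)
    (hKcont : ContinuousOn (fun p : ℝ × ℝ => K p.1 p.2)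
      {p : ℝ × ℝ | 0 ≤ p.2 ∧ p.2 ≤ p.1 ∧ p.1 ≤ T})
    (hKbd : ∀ s t : ℝ, 0 ≤ s → s ≤ t → t ≤ T → ‖K t s‖ ≤ M) :
    ∃ U : ℝ → E,
      (ContinuousOn U (Icc 0 T) ∧
        ∀ t ∈ Icc (0:ℝ) T, U t = J t + ∫ s in (0:ℝ)..t, K t s (U s)) ∧
      ∀ V : ℝ → E,
        (ContinuousOn V (Icc 0 T) ∧
          ∀ t ∈ Icc (0:ℝ) T, V t = J t + ∫ s in (0:ℝ)..t, K t s (V s)) →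
        EqOn U V (Icc 0 T) :=
  stmt_2_general T M hT J hJ K hKcont hKbd
end

section
/- Let 0 < β < 1. Then the function v ↦ (1 − v)₊^{β−1} − (−v)₊^{β−1} (where x₊ = max(x, 0), and the convention 0^{β−1} is irrelevant up to a Lebesgue-null set) is integrable on ℝ with respect to Lebesgue measure. -/
/-! After the reflection `v ↦ -v` the function becomes `x ↦ (x + 1)₊^s - x₊^s`, `s = β - 1`.
Both terms are locally integrable since `-1 < s`, the difference vanishes for `x ≤ -1`, and for
`x > 0` the mean value theorem bounds it by `|s| x^(s-1)`, which is integrable at infinity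
because `s < 0`. -/

open MeasureTheory Set Real Filter Asymptotics

theorem MeasureTheory.LocallyIntegrable.comp_add_right {G E : Type*} [NormedAddCommGroup E]
    [TopologicalSpace G] [AddGroup G] [IsTopologicalAddGroup G] [MeasurableSpace G] [BorelSpace G]
    {μ : Measure G} [μ.IsAddRightInvariant] {f : G → E} (hf : LocallyIntegrable f μ) (c : G) :
    LocallyIntegrable (fun x => f (x + c)) μ := by
  rw [← map_add_right_eq_self μ c] at hf
  exact (locallyIntegrable_map_homeomorph (Homeomorph.addRight c)).1 hf

theorem abs_max_rpow_le (x s : ℝ) : |max x 0 ^ s| ≤ |x| ^ s := by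
  rcases le_total x 0 with hx | hx
  · rw [max_eq_right hx]
    rcases eq_or_ne s 0 with rfl | hs
    · simp
    · rw [zero_rpow hs, abs_zero]
      exact rpow_nonneg (abs_nonneg x) s
  · rw [max_eq_left hx, abs_of_nonneg hx, abs_of_nonneg (rpow_nonneg hx s)]

theorem locallyIntegrable_max_rpow {s : ℝ} (hs : -1 < s) :
    LocallyIntegrable (fun x : ℝ => max x 0 ^ s) := by
  refine locallyIntegrable_of_norm_le_rpow (C := 1) (α := -s) (by simp)
    (by rw [Module.finrank_self, Nat.cast_one]; linarith) (Eventually.of_forall fun x => ?_)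
    (by fun_prop : Measurable _).aestronglyMeasurable
  simpa [norm_eq_abs] using abs_max_rpow_le x s

theorem abs_rpow_add_one_sub_rpow_le {s x : ℝ} (hs : s ≤ 1) (hx : 0 < x) :
    |(x + 1) ^ s - x ^ s| ≤ |s| * x ^ (s - 1) := by
  have hderiv : ∀ y ∈ Icc x (x + 1),
      HasDerivWithinAt (fun y => y ^ s) (s * y ^ (s - 1)) (Icc x (x + 1)) y :=
    fun y hy => (hasDerivAt_rpow_const (Or.inl (hx.trans_le hy.1).ne')).hasDerivWithinAt
  have hbound : ∀ y ∈ Ico x (x + 1), ‖s * y ^ (s - 1)‖ ≤ |s| * x ^ (s - 1) := by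
    intro y hy
    rw [norm_mul, norm_eq_abs, norm_eq_abs, abs_of_nonneg (rpow_nonneg (hx.le.trans hy.1) _)]
    exact mul_le_mul_of_nonneg_left (rpow_le_rpow_of_nonpos hx hy.1 (by linarith)) (abs_nonneg s)
  simpa using norm_image_sub_le_of_norm_deriv_le_segment' hderiv hbound (x + 1) (by simp)

theorem integrable_max_add_one_rpow_sub_max_rpow {s : ℝ} (hs₁ : -1 < s) (hs₀ : s < 0) :
    Integrable (fun x : ℝ => max (x + 1) 0 ^ s - max x 0 ^ s) := by
  refine LocallyIntegrable.integrable_of_isBigO_atBot_atTop (g := 0) (g' := fun x => x ^ (s - 1))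
    (((locallyIntegrable_max_rpow hs₁).comp_add_right 1).sub (locallyIntegrable_max_rpow hs₁))
    ?_ integrableAtFilter_zero ?_ (integrableAtFilter_rpow_atTop_iff.2 (by linarith))
  · refine EventuallyEq.isBigO ?_
    filter_upwards [eventually_le_atBot (-1)] with x hx
    simp [max_eq_right (by linarith : x + 1 ≤ 0), max_eq_right (by linarith : x ≤ 0)]
  · refine IsBigO.of_bound |s| ?_
    filter_upwards [eventually_gt_atTop 0] with x hx
    rw [max_eq_left (by linarith), max_eq_left hx.le, norm_eq_abs, norm_eq_abs,
      abs_of_pos (rpow_pos_of_pos hx _)]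
    exact abs_rpow_add_one_sub_rpow_le (by linarith) hx

/-- For `0 < β < 1`, the function `v ↦ (1-v)₊^{β-1} - (-v)₊^{β-1}` is Lebesgue integrable
on `ℝ` (with the convention `0^{β-1} = 0`, which only matters on a null set). -/
theorem stmt_12 (β : ℝ) (hβ0 : 0 < β) (hβ1 : β < 1) :
    Integrable (fun v : ℝ => max (1 - v) 0 ^ (β - 1) - max (-v) 0 ^ (β - 1))
      (volume : Measure ℝ) := by
  simpa [neg_add_eq_sub] using
    (integrable_max_add_one_rpow_sub_max_rpow (s := β - 1) (by linarith) (by linarith)).comp_neg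
end

section
/- Let 0 < β < 1 and C > 0, and set K_β = ∫_ℝ | (1 − v)₊^{β−1} − (−v)₊^{β−1} | dv (which is finite). Then for every measurable function ξ : ℝ → ℝ with |ξ(x)| ≤ C for all x ∈ ℝ, and for all real numbers s < t, one has | ∫_ℝ [ (t − u)₊^{β−1} − (s − u)₊^{β−1} ] ξ(u) du | ≤ C · K_β · (t − s)^β. -/
open MeasureTheory Set

/-! With `a = t - s`, the substitution `u = s + a v` turns the kernel increment into
`a ^ (β - 1) * fracKernel β v`; bounding `ξ` by `C` and integrating gives `C a ^ (β - 1) · a K_β`.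
The kernel is integrable: it vanishes on `[1, ∞)`, its singularities at `0` and `1` have order
`β - 1 > -1`, and by the mean value theorem it decays like `(1 - β) |v| ^ (β - 2)` at `-∞`. -/

noncomputable def fracKernel (β v : ℝ) : ℝ := max (1 - v) 0 ^ (β - 1) - max (-v) 0 ^ (β - 1)

theorem abs_rpow_add_one_sub_rpow_le_s14 {r w : ℝ} (hr : r ≤ 0) (hw : 0 < w) :
    |(w + 1) ^ r - w ^ r| ≤ -r * w ^ (r - 1) := by
  obtain ⟨c, ⟨hwc, -⟩, hc⟩ := exists_hasDerivAt_eq_slope (fun x : ℝ => x ^ r)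
    (fun x => r * x ^ (r - 1)) (lt_add_one w)
    (continuousOn_id.rpow_const fun x hx => Or.inl (hw.trans_le hx.1).ne')
    (fun x hx => Real.hasDerivAt_rpow_const (Or.inl (hw.trans hx.1).ne'))
  rw [add_sub_cancel_left, div_one] at hc
  rw [← hc, abs_mul, abs_of_nonpos hr, abs_of_pos (Real.rpow_pos_of_pos (hw.trans hwc) _)]
  exact mul_le_mul_of_nonneg_left
    (Real.rpow_le_rpow_of_nonpos hw hwc.le (by linarith)) (neg_nonneg.2 hr)

theorem intervalIntegrable_max_zero_rpow {r : ℝ} (hr : -1 < r) (a b : ℝ) :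
    IntervalIntegrable (fun x : ℝ => max x 0 ^ r) volume a b := by
  refine ((intervalIntegral.intervalIntegrable_rpow' hr).norm.add
    (intervalIntegrable_const (c := 1))).mono_fun'
    ((measurable_id.max measurable_const).pow_const r).aestronglyMeasurable
    (ae_of_all _ fun x => ?_)
  dsimp only
  rw [Real.norm_of_nonneg (Real.rpow_nonneg (le_max_right _ _) _)]
  rcases le_total x 0 with hx | hx
  · rw [max_eq_right hx]
    linarith [Real.zero_rpow_le_one r, norm_nonneg (x ^ r)]
  · rw [max_eq_left hx]
    linarith [Real.le_norm_self (x ^ r)]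

theorem mul_max_zero_rpow {a : ℝ} (ha : 0 ≤ a) (x r : ℝ) :
    max (a * x) 0 ^ r = a ^ r * max x 0 ^ r := by
  rw [← Real.mul_rpow ha (le_max_right _ _), mul_max_of_nonneg _ _ ha, mul_zero]

theorem measurable_fracKernel (β : ℝ) : Measurable (fracKernel β) := by
  unfold fracKernel
  fun_prop

theorem fracKernel_neg (β w : ℝ) :
    fracKernel β (-w) = max (w + 1) 0 ^ (β - 1) - max w 0 ^ (β - 1) := by
  rw [fracKernel, sub_neg_eq_add, add_comm, neg_neg]

theorem fracKernel_eq_zero_of_one_le {β v : ℝ} (hv : 1 ≤ v) : fracKernel β v = 0 := by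
  rw [fracKernel, max_eq_right (by linarith), max_eq_right (by linarith), sub_self]

theorem integrable_fracKernel {β : ℝ} (hβ0 : 0 < β) (hβ1 : β < 1) :
    Integrable (fracKernel β) := by
  have hr : -1 < β - 1 := by linarith
  suffices Integrable fun w => fracKernel β (-w) by simpa using this.comp_neg
  rw [← integrableOn_univ, ← Iic_union_Ioi (a := (-1 : ℝ)),
    ← Ioc_union_Ioi_eq_Ioi (show (-1 : ℝ) ≤ 1 by norm_num), integrableOn_union, integrableOn_union]
  refine ⟨?_, ?_, ?_⟩
  · refine integrableOn_zero.congr_fun (fun w hw => ?_) measurableSet_Iic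
    exact (fracKernel_eq_zero_of_one_le (by linarith [mem_Iic.1 hw])).symm
  · simp_rw [fracKernel_neg]
    have hshift := (intervalIntegrable_max_zero_rpow hr 0 2).comp_add_right 1
    norm_num at hshift
    exact (hshift.sub (intervalIntegrable_max_zero_rpow hr (-1) 1)).1
  · have hdom : IntegrableOn (fun w : ℝ => (1 - β) * w ^ (β - 2)) (Ioi 1) :=
      (integrableOn_Ioi_rpow_of_lt (by linarith) one_pos).const_mul _
    refine hdom.mono' ?_ ((ae_restrict_iff' measurableSet_Ioi).2 (ae_of_all _ fun w hw => ?_))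
    · exact (measurable_fracKernel β).comp measurable_neg |>.aestronglyMeasurable
    · have hw : 0 < w := one_pos.trans hw
      rw [fracKernel_neg, max_eq_left (by linarith), max_eq_left hw.le, Real.norm_eq_abs]
      have := abs_rpow_add_one_sub_rpow_le_s14 (by linarith : β - 1 ≤ 0) hw
      rwa [neg_sub, sub_sub, one_add_one_eq_two] at this

theorem rpow_mul_fracKernel_sub_div {s t : ℝ} (hst : s < t) (β u : ℝ) :
    (t - s) ^ (β - 1) * fracKernel β ((u - s) / (t - s)) =
      max (t - u) 0 ^ (β - 1) - max (s - u) 0 ^ (β - 1) := by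
  have ha : t - s ≠ 0 := (sub_pos.2 hst).ne'
  have ht : t - u = (t - s) * (1 - (u - s) / (t - s)) := by field_simp; ring
  have hs : s - u = (t - s) * -((u - s) / (t - s)) := by field_simp; ring
  rw [ht, hs, mul_max_zero_rpow (sub_pos.2 hst).le, mul_max_zero_rpow (sub_pos.2 hst).le,
    fracKernel, mul_sub]

theorem integral_comp_sub_div {E : Type*} [NormedAddCommGroup E] [NormedSpace ℝ E]
    (f : ℝ → E) (s a : ℝ) : ∫ u, f ((u - s) / a) = |a| • ∫ v, f v := by
  rw [integral_sub_right_eq_self (fun u => f (u / a)) s, Measure.integral_comp_div]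

theorem stmt_14_general (β C : ℝ) (hβ0 : 0 < β) (hβ1 : β < 1)
    (Kβ : ℝ)
    (hKβ : Kβ = ∫ v : ℝ, |max (1 - v) 0 ^ (β - 1) - max (-v) 0 ^ (β - 1)|) :
    Integrable (fun v : ℝ => |max (1 - v) 0 ^ (β - 1) - max (-v) 0 ^ (β - 1)|)
      (volume : Measure ℝ) ∧
    ∀ ξ : ℝ → ℝ, Measurable ξ → (∀ x : ℝ, |ξ x| ≤ C) → ∀ s t : ℝ, s < t →
      |∫ u : ℝ, (max (t - u) 0 ^ (β - 1) - max (s - u) 0 ^ (β - 1)) * ξ u|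
        ≤ C * Kβ * (t - s) ^ β := by
  have hK : Integrable fun v => |fracKernel β v| := (integrable_fracKernel hβ0 hβ1).abs
  have hKβ' : ∫ v, |fracKernel β v| = Kβ := hKβ.symm
  refine ⟨hK, fun ξ _ hξ s t hst => ?_⟩
  have ha : 0 < t - s := sub_pos.2 hst
  calc |∫ u, (max (t - u) 0 ^ (β - 1) - max (s - u) 0 ^ (β - 1)) * ξ u|
      ≤ ∫ u, C * ((t - s) ^ (β - 1) * |fracKernel β ((u - s) / (t - s))|) := by
        rw [← Real.norm_eq_abs]
        refine norm_integral_le_of_norm_le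
          (((hK.comp_div ha.ne').comp_sub_right s).const_mul _ |>.const_mul _)
          (ae_of_all _ fun u => ?_)
        rw [← rpow_mul_fracKernel_sub_div hst, Real.norm_eq_abs, abs_mul, abs_mul,
          abs_of_pos (Real.rpow_pos_of_pos ha _), mul_comm C]
        exact mul_le_mul_of_nonneg_left (hξ u) (by positivity)
    _ = C * Kβ * ((t - s) ^ (β - 1) * (t - s)) := by
        rw [integral_const_mul, integral_const_mul,
          integral_comp_sub_div (fun v => |fracKernel β v|), abs_of_pos ha, smul_eq_mul, hKβ']
        ring
    _ = C * Kβ * (t - s) ^ β := by rw [← Real.rpow_add_one ha.ne', sub_add_cancel]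

/-- The Hölder-type estimate of exponent `β` from the proof of Theorem 4.2: with
`K_β = ∫ |(1-v)₊^{β-1} - (-v)₊^{β-1}| dv` (finite), for every measurable `ξ` bounded by `C`
and all `s < t`,
`|∫ [(t-u)₊^{β-1} - (s-u)₊^{β-1}] ξ(u) du| ≤ C · K_β · (t-s)^β`. -/
theorem stmt_14 (β C : ℝ) (hβ0 : 0 < β) (hβ1 : β < 1) (hC : 0 < C)
    (Kβ : ℝ)
    (hKβ : Kβ = ∫ v : ℝ, |max (1 - v) 0 ^ (β - 1) - max (-v) 0 ^ (β - 1)|) :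
    Integrable (fun v : ℝ => |max (1 - v) 0 ^ (β - 1) - max (-v) 0 ^ (β - 1)|)
      (volume : Measure ℝ) ∧
    ∀ ξ : ℝ → ℝ, Measurable ξ → (∀ x : ℝ, |ξ x| ≤ C) → ∀ s t : ℝ, s < t →
      |∫ u : ℝ, (max (t - u) 0 ^ (β - 1) - max (s - u) 0 ^ (β - 1)) * ξ u|
        ≤ C * Kβ * (t - s) ^ β :=
  stmt_14_general β C hβ0 hβ1 Kβ hKβ
end

section
/- Let 0 < β < 1/2, p > 1 and C > 0, and let (ξ_n)_{n≥1} be a sequence of measurable functions ξ_n : ℝ → ℝ with |ξ_n(x)| ≤ C for all n ≥ 1 and x ∈ ℝ. Then there exists a constant C′ > 0 such that for all real numbers s < t, Σ_{n=1}^∞ (n + 1)^{−2p} ( ∫_ℝ [ (t − u)₊^{β−1} − (s − u)₊^{β−1} ] ξ_n(u) du )² ≤ C′ (t − s)^{2β}. -/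
open MeasureTheory Set

/-!
Each coefficient integral is at most `C` times the `L¹` norm of the kernel
`u ↦ (t - u)₊^(β-1) - (s - u)₊^(β-1)`. Substituting `v = s - u` and writing `δ = t - s`, that norm
is `∫ |(v + δ)₊^(β-1) - v₊^(β-1)| dv`: the ranges `v ≤ 0` and `0 < v ≤ δ` each contribute at most
`δ^β / β`, and for `v > δ` the mean value theorem gives
`v^(β-1) - (v + δ)^(β-1) ≤ (1 - β) δ v^(β-2)`, whose integral over `(δ, ∞)` is `δ^β`.
Squaring, the series is at most `(∑ (n + 2)^(-2p)) (C (2/β + 1))² δ^(2β)`, finite since `2p > 1`.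
-/

lemma rpow_sub_rpow_add_le {β v δ : ℝ} (hβ1 : β < 1) (hv : 0 < v) (hδ : 0 < δ) :
    v ^ (β - 1) - (v + δ) ^ (β - 1) ≤ (1 - β) * δ * v ^ (β - 2) := by
  have hderiv (x : ℝ) (hx : x ∈ Ioo v (v + δ)) :
      HasDerivAt (fun x => x ^ (β - 1)) ((β - 1) * x ^ (β - 2)) x := by
    simpa [show β - 1 - 1 = β - 2 by ring] using
      Real.hasDerivAt_rpow_const (p := β - 1) (Or.inl (hv.trans hx.1).ne')
  have hcont : ContinuousOn (fun x : ℝ => x ^ (β - 1)) (Icc v (v + δ)) := fun x hx =>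
    (Real.continuousAt_rpow_const _ _ (Or.inl (hv.trans_le hx.1).ne')).continuousWithinAt
  obtain ⟨c, hc, hslope⟩ := exists_hasDerivAt_eq_slope _ _ (by linarith) hcont hderiv
  rw [add_sub_cancel_left, eq_div_iff hδ.ne'] at hslope
  have hcoef : 0 ≤ (1 - β) * δ := mul_nonneg (by linarith) hδ.le
  calc v ^ (β - 1) - (v + δ) ^ (β - 1) = (1 - β) * δ * c ^ (β - 2) := by linarith
    _ ≤ (1 - β) * δ * v ^ (β - 2) :=
      mul_le_mul_of_nonneg_left (Real.rpow_le_rpow_of_nonpos hv hc.1.le (by linarith)) hcoef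

lemma lintegral_Iic_max_rpow {β a : ℝ} (hβ0 : 0 < β) (hβ1 : β ≠ 1) (ha : 0 ≤ a) :
    ∫⁻ x in Iic a, ENNReal.ofReal (max x 0 ^ (β - 1)) = ENNReal.ofReal (a ^ β / β) := by
  rw [← Iic_union_Ioc_eq_Iic ha, lintegral_union measurableSet_Ioc (Iic_disjoint_Ioc le_rfl)]
  have hneg : ∫⁻ x in Iic (0 : ℝ), ENNReal.ofReal (max x 0 ^ (β - 1)) = 0 := by
    refine setLIntegral_eq_zero measurableSet_Iic fun x hx => ?_
    simp [max_eq_right (mem_Iic.1 hx), Real.zero_rpow (sub_ne_zero.2 hβ1)]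
  have hpos : ∫⁻ x in Ioc 0 a, ENNReal.ofReal (max x 0 ^ (β - 1))
      = ∫⁻ x in Ioc 0 a, ENNReal.ofReal (x ^ (β - 1)) :=
    setLIntegral_congr_fun measurableSet_Ioc fun x hx => by rw [max_eq_left hx.1.le]
  rw [hneg, zero_add, hpos, ← ofReal_integral_eq_lintegral_ofReal
    (intervalIntegral.intervalIntegrable_rpow' (by linarith)).1
    ((ae_restrict_iff' measurableSet_Ioc).2 (ae_of_all _ fun x hx => Real.rpow_nonneg hx.1.le _)),
    ← intervalIntegral.integral_of_le ha, integral_rpow (Or.inl (by linarith)),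
    sub_add_cancel, Real.zero_rpow hβ0.ne', sub_zero]

lemma lintegral_Ioi_mul_rpow_sub_two {β δ : ℝ} (hβ1 : β < 1) (hδ : 0 < δ) :
    ∫⁻ v in Ioi δ, ENNReal.ofReal ((1 - β) * δ * v ^ (β - 2)) = ENNReal.ofReal (δ ^ β) := by
  have hcoef : 0 ≤ (1 - β) * δ := mul_nonneg (by linarith) hδ.le
  rw [← ofReal_integral_eq_lintegral_ofReal
    ((integrableOn_Ioi_rpow_of_lt (by linarith) hδ).const_mul _)
    ((ae_restrict_iff' measurableSet_Ioi).2 (ae_of_all _ fun v hv =>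
      mul_nonneg hcoef (Real.rpow_nonneg (hδ.trans hv).le _))),
    integral_const_mul, integral_Ioi_rpow_of_lt (by linarith) hδ,
    show β - 2 + 1 = β - 1 by ring, Real.rpow_sub_one hδ.ne']
  congr 1
  have : β - 1 ≠ 0 := by linarith
  field_simp
  ring

lemma lintegral_abs_max_rpow_add_sub_le {β δ : ℝ} (hβ0 : 0 < β) (hβ1 : β < 1) (hδ : 0 < δ) :
    ∫⁻ v, ENNReal.ofReal |max (v + δ) 0 ^ (β - 1) - max v 0 ^ (β - 1)|
      ≤ ENNReal.ofReal ((2 / β + 1) * δ ^ β) := by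
  set F := fun v : ℝ => ENNReal.ofReal |max (v + δ) 0 ^ (β - 1) - max v 0 ^ (β - 1)|
  have hF_pos (v : ℝ) (hv : 0 < v) : F v = ENNReal.ofReal (v ^ (β - 1) - (v + δ) ^ (β - 1)) := by
    simp only [F, max_eq_left hv.le, max_eq_left (by linarith : 0 ≤ v + δ)]
    rw [abs_sub_comm, abs_of_nonneg (sub_nonneg.2
      (Real.rpow_le_rpow_of_nonpos hv (by linarith) (by linarith)))]
  have hneg : ∫⁻ v in Iic 0, F v = ENNReal.ofReal (δ ^ β / β) := by
    have hpre : (· + δ) ⁻¹' Iic δ = Iic (0 : ℝ) := by ext v; simp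
    calc ∫⁻ v in Iic 0, F v
        = ∫⁻ v in (· + δ) ⁻¹' Iic δ, ENNReal.ofReal (max (v + δ) 0 ^ (β - 1)) := by
          rw [hpre]
          refine setLIntegral_congr_fun measurableSet_Iic fun v hv => ?_
          simp only [F, max_eq_right (mem_Iic.1 hv), Real.zero_rpow (by linarith : β - 1 ≠ 0),
            sub_zero, abs_of_nonneg (Real.rpow_nonneg (le_max_right _ _) _)]
      _ = ∫⁻ w in Iic δ, ENNReal.ofReal (max w 0 ^ (β - 1)) :=
          (measurePreserving_add_right volume δ).setLIntegral_comp_preimage_emb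
            (measurableEmbedding_addRight δ) (fun w => ENNReal.ofReal (max w 0 ^ (β - 1))) (Iic δ)
      _ = ENNReal.ofReal (δ ^ β / β) := lintegral_Iic_max_rpow hβ0 hβ1.ne hδ.le
  have hmid : ∫⁻ v in Ioc 0 δ, F v ≤ ENNReal.ofReal (δ ^ β / β) :=
    calc ∫⁻ v in Ioc 0 δ, F v ≤ ∫⁻ v in Ioc 0 δ, ENNReal.ofReal (max v 0 ^ (β - 1)) := by
          refine setLIntegral_mono' measurableSet_Ioc fun v hv => ?_
          rw [hF_pos v hv.1, max_eq_left hv.1.le]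
          exact ENNReal.ofReal_le_ofReal (sub_le_self _ (Real.rpow_nonneg (by linarith [hv.1]) _))
      _ ≤ ∫⁻ v in Iic δ, ENNReal.ofReal (max v 0 ^ (β - 1)) :=
          lintegral_mono_set Ioc_subset_Iic_self
      _ = ENNReal.ofReal (δ ^ β / β) := lintegral_Iic_max_rpow hβ0 hβ1.ne hδ.le
  have htail : ∫⁻ v in Ioi δ, F v ≤ ENNReal.ofReal (δ ^ β) := by
    rw [← lintegral_Ioi_mul_rpow_sub_two hβ1 hδ]
    refine setLIntegral_mono' measurableSet_Ioi fun v hv => ?_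
    rw [hF_pos v (hδ.trans hv)]
    exact ENNReal.ofReal_le_ofReal (rpow_sub_rpow_add_le hβ1 (hδ.trans hv) hδ)
  calc ∫⁻ v, F v
        = (∫⁻ v in Iic 0, F v) + ((∫⁻ v in Ioc 0 δ, F v) + ∫⁻ v in Ioi δ, F v) := by
        rw [← lintegral_union measurableSet_Ioi Ioc_disjoint_Ioi_same,
          Ioc_union_Ioi_eq_Ioi hδ.le, ← compl_Iic, lintegral_add_compl _ measurableSet_Iic]
    _ ≤ ENNReal.ofReal (δ ^ β / β) + (ENNReal.ofReal (δ ^ β / β) + ENNReal.ofReal (δ ^ β)) := by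
        rw [hneg]; gcongr
    _ = ENNReal.ofReal ((2 / β + 1) * δ ^ β) := by
        rw [← ENNReal.ofReal_add (by positivity) (by positivity),
          ← ENNReal.ofReal_add (by positivity) (by positivity)]
        congr 1
        ring

lemma lintegral_abs_max_rpow_sub_sub_le {β s t : ℝ} (hβ0 : 0 < β) (hβ1 : β < 1) (hst : s < t) :
    ∫⁻ u, ENNReal.ofReal |max (t - u) 0 ^ (β - 1) - max (s - u) 0 ^ (β - 1)|
      ≤ ENNReal.ofReal ((2 / β + 1) * (t - s) ^ β) := by
  calc ∫⁻ u, ENNReal.ofReal |max (t - u) 0 ^ (β - 1) - max (s - u) 0 ^ (β - 1)|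
      = ∫⁻ u, ENNReal.ofReal |max (s - u + (t - s)) 0 ^ (β - 1) - max (s - u) 0 ^ (β - 1)| :=
        lintegral_congr fun u => by rw [sub_add_sub_cancel']
    _ = ∫⁻ v, ENNReal.ofReal |max (v + (t - s)) 0 ^ (β - 1) - max v 0 ^ (β - 1)| :=
        lintegral_sub_left_eq_self
          (fun v => ENNReal.ofReal |max (v + (t - s)) 0 ^ (β - 1) - max v 0 ^ (β - 1)|) s
    _ ≤ ENNReal.ofReal ((2 / β + 1) * (t - s) ^ β) :=
        lintegral_abs_max_rpow_add_sub_le hβ0 hβ1 (sub_pos.2 hst)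

lemma abs_integral_mul_le_of_lintegral_le {α : Type*} [MeasurableSpace α] {μ : Measure α}
    {k ξ : α → ℝ} {B C : ℝ} (hB : 0 ≤ B) (hC : 0 ≤ C) (hξ : ∀ x, |ξ x| ≤ C)
    (hk : ∫⁻ x, ENNReal.ofReal |k x| ∂μ ≤ ENNReal.ofReal B) :
    |∫ x, k x * ξ x ∂μ| ≤ C * B := by
  refine (norm_integral_le_lintegral_norm (μ := μ) fun x => k x * ξ x).trans
    (ENNReal.toReal_le_of_le_ofReal (by positivity) ?_)
  calc ∫⁻ x, ENNReal.ofReal ‖k x * ξ x‖ ∂μ ≤ ∫⁻ x, ENNReal.ofReal C * ENNReal.ofReal |k x| ∂μ :=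
        lintegral_mono fun x => by
          rw [← ENNReal.ofReal_mul hC, Real.norm_eq_abs, abs_mul, mul_comm]
          exact ENNReal.ofReal_le_ofReal (mul_le_mul_of_nonneg_right (hξ x) (abs_nonneg _))
    _ = ENNReal.ofReal C * ∫⁻ x, ENNReal.ofReal |k x| ∂μ :=
        lintegral_const_mul' _ _ ENNReal.ofReal_ne_top
    _ ≤ ENNReal.ofReal (C * B) := by
        rw [ENNReal.ofReal_mul hC]
        gcongr

lemma tsum_mul_sq_le_of_abs_le {ι : Type*} {w a : ι → ℝ} {M : ℝ} (hw : Summable w)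
    (hw0 : ∀ i, 0 ≤ w i) (ha : ∀ i, |a i| ≤ M) :
    ∑' i, w i * a i ^ 2 ≤ (∑' i, w i) * M ^ 2 := by
  have hterm (i : ι) : w i * a i ^ 2 ≤ w i * M ^ 2 :=
    mul_le_mul_of_nonneg_left (sq_le_sq' (abs_le.1 (ha i)).1 (abs_le.1 (ha i)).2) (hw0 i)
  have hbound : Summable fun i => w i * M ^ 2 := hw.mul_right _
  rw [← tsum_mul_right]
  have hsum : Summable fun i => w i * a i ^ 2 :=
    hbound.of_nonneg_of_le (fun i => mul_nonneg (hw0 i) (sq_nonneg _)) hterm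
  exact hsum.tsum_le_tsum hterm hbound

theorem stmt_15_general (β p C : ℝ) (hβ0 : 0 < β) (hβ : β < 1 / 2) (hp : 1 < p) (hC : 0 < C)
    (ξ : ℕ → ℝ → ℝ)
    (hbd : ∀ n : ℕ, 1 ≤ n → ∀ x : ℝ, |ξ n x| ≤ C) :
    ∃ C' : ℝ, 0 < C' ∧ ∀ s t : ℝ, s < t →
      (∑' n : ℕ, ((n : ℝ) + 2) ^ (-(2 * p)) *
          (∫ u : ℝ, (max (t - u) 0 ^ (β - 1) - max (s - u) 0 ^ (β - 1)) * ξ (n + 1) u) ^ 2)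
        ≤ C' * (t - s) ^ (2 * β) := by
  set w : ℕ → ℝ := fun n => ((n : ℝ) + 2) ^ (-(2 * p))
  have hw0 (n : ℕ) : 0 ≤ w n := by positivity
  have hw : Summable w := by
    have hrpow : Summable fun n : ℕ => (n : ℝ) ^ (-(2 * p)) :=
      Real.summable_nat_rpow.2 (by linarith)
    exact ((summable_nat_add_iff 2).2 hrpow).congr fun n => by simp [w]
  have hw_pos : 0 < ∑' n, w n := hw.tsum_pos hw0 0 (by positivity)
  set K := 2 / β + 1
  refine ⟨(∑' n, w n) * (C * K) ^ 2, by positivity, fun s t hst => ?_⟩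
  have hI (n : ℕ) :
      |∫ u : ℝ, (max (t - u) 0 ^ (β - 1) - max (s - u) 0 ^ (β - 1)) * ξ (n + 1) u|
        ≤ C * (K * (t - s) ^ β) :=
    abs_integral_mul_le_of_lintegral_le (by have := sub_pos.2 hst; positivity) hC.le
      (hbd (n + 1) le_add_self) (lintegral_abs_max_rpow_sub_sub_le hβ0 (by linarith) hst)
  calc _ ≤ (∑' n, w n) * (C * (K * (t - s) ^ β)) ^ 2 := tsum_mul_sq_le_of_abs_le hw hw0 hI
    _ = (∑' n, w n) * (C * K) ^ 2 * (t - s) ^ (2 * β) := by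
      rw [two_mul, Real.rpow_add (sub_pos.2 hst)]
      ring

/-- The weighted series estimate from the proof of Theorem 4.2: for `0 < β < 1/2`, `p > 1`
and a sequence `(ξ_n)_{n ≥ 1}` of measurable functions uniformly bounded by `C`, there is a
constant `C' > 0` such that for all `s < t`,
`Σ_{n=1}^∞ (n+1)^{-2p} (∫ [(t-u)₊^{β-1} - (s-u)₊^{β-1}] ξ_n(u) du)² ≤ C' (t-s)^{2β}`.
(The sum over `n ≥ 1` is written as a `tsum` over `ℕ` via `n ↦ n + 1`.) -/
theorem stmt_15 (β p C : ℝ) (hβ0 : 0 < β) (hβ : β < 1 / 2) (hp : 1 < p) (hC : 0 < C)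
    (ξ : ℕ → ℝ → ℝ)
    (hmeas : ∀ n : ℕ, 1 ≤ n → Measurable (ξ n))
    (hbd : ∀ n : ℕ, 1 ≤ n → ∀ x : ℝ, |ξ n x| ≤ C) :
    ∃ C' : ℝ, 0 < C' ∧ ∀ s t : ℝ, s < t →
      (∑' n : ℕ, ((n : ℝ) + 2) ^ (-(2 * p)) *
          (∫ u : ℝ, (max (t - u) 0 ^ (β - 1) - max (s - u) 0 ^ (β - 1)) * ξ (n + 1) u) ^ 2)
        ≤ C' * (t - s) ^ (2 * β) :=
  stmt_15_general β p C hβ0 hβ hp hC ξ hbd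
end
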